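/- arXiv:2307.02550 — 5 statements merged into one kernel-verified Lean document; each statement's English description precedes it below -/
import Mathlib

section
/- Let n ≥ 1 and let D be a delta-matroid on [n, n̄] with feasible sets F. For every subset S ⊆ [n], the ℓ¹-distance from the point e_S to the polytope P(D), i.e. the infimum of ‖e_S − x‖₁ over x ∈ P(D), is attained and equals d_D(S) = min over B ∈ F of |S △ (B ∩ [n])| (the symmetric difference cardinality), which also equals min over B ∈ F of (|S ∪ (B∩[n])| − |S ∩ B ∩ [n]|). -/
/-!
On the cube `[0,1]^n`, the ℓ¹-distance to the vertex `e_S` is the affine function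
`x ↦ ∑ i, (e_S i + (1 - 2 e_S i) x i)`, hence concave there. The vertices `e_B` of `P(D)` lie in the
cube, so by the minimum principle for concave functions the distance is minimised over `P(D)`
at one of them, where it equals `|S △ B|`.
-/

open Finset

/-- The 0/1 indicator vector `e_S ∈ ℝ^n` of a subset `S ⊆ [n]`. -/
def eVec {n : ℕ} (S : Finset (Fin n)) : Fin n → ℝ := fun i => if i ∈ S then 1 else 0

/-- The base polytope `P(D) = conv{e_{B ∩ [n]} : B ∈ F}`, where a maximal admissible subset
`B ⊆ [n] ∪ [n̄]` is identified with the subset `B ∩ [n]` of `[n]` (this identification is a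
bijection between maximal admissible subsets and subsets of `[n]`). -/
def basePolytope {n : ℕ} (F : Finset (Finset (Fin n))) : Set (Fin n → ℝ) :=
  convexHull ℝ (eVec '' (F : Set (Finset (Fin n))))

/-- `d` is `±e_i`, `±(e_i + e_j)` or `±(e_i - e_j)` for some `i, j ∈ [n]`, i.e. a segment
from `x` to `x + d` is a parallel translate of `e_i` or `e_i ± e_j`. -/
def IsEdgeDir {n : ℕ} (d : Fin n → ℝ) : Prop :=
  (∃ i : Fin n, d = Pi.single i 1 ∨ d = -Pi.single i 1) ∨
  (∃ i j : Fin n, d = Pi.single i 1 + Pi.single j 1 ∨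
      d = -(Pi.single i 1 + Pi.single j 1) ∨ d = Pi.single i 1 - Pi.single j 1)

/-- A delta-matroid on `[n, n̄]`: a nonempty collection of (maximal admissible) feasible sets,
each recorded via its intersection with `[n]`, such that every edge of the base polytope
(i.e. every segment between two distinct points which is an extreme subset of the polytope)
is a parallel translate of `e_i` or `e_i ± e_j`. -/
structure DeltaMatroid (n : ℕ) where
  feasible : Finset (Finset (Fin n))
  feasible_nonempty : feasible.Nonempty
  edge_dir : ∀ x y : Fin n → ℝ, x ∈ basePolytope feasible → y ∈ basePolytope feasible →
      x ≠ y → IsExtreme ℝ (basePolytope feasible) (segment ℝ x y) → IsEdgeDir (y - x)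

/-- `d_D(S) = min_{B ∈ F} |S △ (B ∩ [n])|`. -/
def dDist {n : ℕ} (D : DeltaMatroid n) (S : Finset (Fin n)) : ℕ :=
  (D.feasible.image fun B => (symmDiff S B).card).min' (D.feasible_nonempty.image _)

lemma eVec_mem_Icc {n : ℕ} (T : Finset (Fin n)) : eVec T ∈ Set.Icc (0 : Fin n → ℝ) 1 := by
  constructor <;> intro i <;> by_cases h : i ∈ T <;> simp [eVec, h]

lemma sum_eVec {n : ℕ} (T : Finset (Fin n)) : ∑ i, eVec T i = (#T : ℝ) := by
  simp [eVec]

lemma abs_eVec_sub_eVec {n : ℕ} (S B : Finset (Fin n)) (i : Fin n) :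
    |eVec S i - eVec B i| = eVec (symmDiff S B) i := by
  by_cases hS : i ∈ S <;> by_cases hB : i ∈ B <;> simp [eVec, mem_symmDiff, hS, hB]

lemma sum_abs_eVec_sub_eVec {n : ℕ} (S B : Finset (Fin n)) :
    ∑ i, |eVec S i - eVec B i| = (#(symmDiff S B) : ℝ) := by
  simp only [abs_eVec_sub_eVec, sum_eVec]

lemma abs_eVec_sub_of_mem_Icc {n : ℕ} (S : Finset (Fin n)) {x : Fin n → ℝ}
    (hx : x ∈ Set.Icc 0 1) (i : Fin n) :
    |eVec S i - x i| = eVec S i + (1 - 2 * eVec S i) * x i := by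
  have h0 : 0 ≤ x i := hx.1 i
  have h1 : x i ≤ 1 := hx.2 i
  by_cases hS : i ∈ S
  · simp only [eVec, if_pos hS]
    rw [abs_of_nonneg (by linarith)]
    ring
  · simp only [eVec, if_neg hS]
    rw [abs_of_nonpos (by linarith)]
    ring

lemma concaveOn_sum_abs_eVec_sub {n : ℕ} (S : Finset (Fin n)) :
    ConcaveOn ℝ (Set.Icc 0 1) fun x : Fin n → ℝ => ∑ i, |eVec S i - x i| := by
  refine ⟨convex_Icc 0 1, fun x hx y hy a b ha hb hab => le_of_eq ?_⟩
  have hxy : a • x + b • y ∈ Set.Icc (0 : Fin n → ℝ) 1 := convex_Icc 0 1 hx hy ha hb hab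
  simp only [smul_eq_mul, mul_sum, ← sum_add_distrib]
  refine sum_congr rfl fun i _ => ?_
  rw [abs_eVec_sub_of_mem_Icc S hx, abs_eVec_sub_of_mem_Icc S hy, abs_eVec_sub_of_mem_Icc S hxy]
  simp only [Pi.add_apply, Pi.smul_apply, smul_eq_mul]
  linear_combination eVec S i * hab

lemma Finset.card_symmDiff {α : Type*} [DecidableEq α] (s t : Finset α) :
    #(symmDiff s t) = #(s ∪ t) - #(s ∩ t) := by
  rw [symmDiff_eq_sup_sdiff_inf]
  exact card_sdiff_of_subset inf_le_sup

lemma exists_dDist_eq {n : ℕ} (D : DeltaMatroid n) (S : Finset (Fin n)) :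
    ∃ B ∈ D.feasible, #(symmDiff S B) = dDist D S :=
  mem_image.1 (min'_mem _ _)

lemma dDist_le {n : ℕ} (D : DeltaMatroid n) (S : Finset (Fin n)) {B : Finset (Fin n)}
    (hB : B ∈ D.feasible) : dDist D S ≤ #(symmDiff S B) :=
  min'_le _ _ (mem_image_of_mem _ hB)

theorem stmt0_general {n : ℕ} (D : DeltaMatroid n) (S : Finset (Fin n)) :
    IsLeast {r : ℝ | ∃ x ∈ basePolytope D.feasible, r = ∑ i, |eVec S i - x i|}
      ((dDist D S : ℝ)) ∧
    dDist D S
      = (D.feasible.image fun B => (S ∪ B).card - (S ∩ B).card).min'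
          (D.feasible_nonempty.image _) := by
  refine ⟨⟨?_, ?_⟩, ?_⟩
  · obtain ⟨B, hB, hBS⟩ := exists_dDist_eq D S
    exact ⟨eVec B, subset_convexHull ℝ _ ⟨B, hB, rfl⟩, by rw [sum_abs_eVec_sub_eVec, hBS]⟩
  · rintro r ⟨x, hx, rfl⟩
    obtain ⟨_, ⟨B, hB, rfl⟩, hBx⟩ := (concaveOn_sum_abs_eVec_sub S).exists_le_of_mem_convexHull
      (by rintro _ ⟨B, -, rfl⟩; exact eVec_mem_Icc B) hx
    rw [sum_abs_eVec_sub_eVec] at hBx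
    exact (Nat.cast_le.2 (dDist_le D S hB)).trans hBx
  · simp only [dDist, ← card_symmDiff]

/-- The ℓ¹-distance from `e_S` to `P(D)` is attained and equals
`d_D(S) = min_{B ∈ F} |S △ (B ∩ [n])| = min_{B ∈ F} (|S ∪ (B ∩ [n])| - |S ∩ B ∩ [n]|)`. -/
theorem stmt0 {n : ℕ} (hn : 1 ≤ n) (D : DeltaMatroid n) (S : Finset (Fin n)) :
    IsLeast {r : ℝ | ∃ x ∈ basePolytope D.feasible, r = ∑ i, |eVec S i - x i|}
      ((dDist D S : ℝ)) ∧
    dDist D S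
      = (D.feasible.image fun B => (S ∪ B).card - (S ∩ B).card).min'
          (D.feasible_nonempty.image _) :=
  stmt0_general D S
end

section
/- Let n ≥ 1. Let W be the group of signed permutations on [n, n̄], i.e. bijections w of [n] ∪ [n̄] with w(ī) = w(i)‾ for all i ∈ [n], viewed via their restriction w : [n] → [n] ∪ [n̄]. For i ∈ [n] set ε_i = e_i ∈ ℤ^n and ε_ī = −e_i. For 1 ≤ k ≤ n−1, let wτ_k be the signed permutation agreeing with w except (wτ_k)(k) = w(k+1) and (wτ_k)(k+1) = w(k), with associated exponent vector c = ε_{w(k)} − ε_{w(k+1)}; let wτ_n agree with w except (wτ_n)(n) = w(n)‾, with associated exponent vector c = ε_{w(n)}. Let L = ℤ[T_1^{±1},…,T_n^{±1}], let K = Frac(ℚ[t_1,…,t_n]), let φ : L → K be the ring homomorphism with φ(T_i) = (1+t_i)/(1−t_i), and let S ⊆ K be the subring generated by ℤ[t_1,…,t_n] and all (1−t_i)^{−1}, (1+t_i)^{−1}. Suppose (f_w)_{w∈W} is a family in L such that for every w ∈ W and every k ∈ {1,…,n}, the difference f_w − f_{wτ_k} is divisible in L by 1 − T^c, where c is the associated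 exponent vector and T^c = ∏_j T_j^{c_j}. Then φ(f_w) ∈ S for every w, and for every w and k, φ(f_w) − φ(f_{wτ_k}) ∈ (Σ_{j=1}^n c_j t_j) · S. -/
/-- The Laurent polynomial ring `ℤ[T_1^{±1},…,T_n^{±1}]`, realized as the group algebra
of `ℤ^n` over `ℤ` (equivalently, the localization of `ℤ[T_1,…,T_n]` at monomials). -/
abbrev Laur (n : ℕ) : Type := AddMonoidAlgebra ℤ (Fin n →₀ ℤ)

/-- The variable `T_i` in `ℤ[T_1^{±1},…,T_n^{±1}]`. -/
noncomputable def Tvar (n : ℕ) (i : Fin n) : Laur n :=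
  AddMonoidAlgebra.single (Finsupp.single i 1) 1

/-- `K = Frac(ℚ[t_1,…,t_n])`, the field of rational functions. -/
abbrev KK (n : ℕ) : Type := FractionRing (MvPolynomial (Fin n) ℚ)

/-- The element `t_i ∈ K`. -/
noncomputable def tvar (n : ℕ) (i : Fin n) : KK n :=
  algebraMap (MvPolynomial (Fin n) ℚ) (KK n) (MvPolynomial.X i)

/-- The subring `S ⊆ K` generated by `ℤ[t_1,…,t_n]` together with the
elements `(1-t_i)⁻¹` and `(1+t_i)⁻¹`. -/
noncomputable def SS (n : ℕ) : Subring (KK n) :=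
  Subring.closure (Set.range (tvar n) ∪ Set.range (fun i => (1 - tvar n i)⁻¹)
    ∪ Set.range (fun i => (1 + tvar n i)⁻¹))

/-- A signed permutation `w` of `[n, n̄]`, encoded as an underlying permutation `w.1` of `[n]`
together with signs `w.2 : [n] → Bool` (so `w(k) = w.1 k` if `w.2 k = true`, and
`w(k) = (w.1 k)‾` otherwise). -/
abbrev SignedPerm (n : ℕ) : Type := Equiv.Perm (Fin n) × (Fin n → Bool)

/-- Sign of a `Bool`: `true ↦ 1`, `false ↦ -1`. -/
def sgnZ (b : Bool) : ℤ := if b then 1 else -1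

/-- The exponent vector `c` attached to the edge `(w, wτ)` of the moment graph:
for `k` with `k + 1 < n` (the adjacent transposition `τ_{k,k+1}`, 0-indexed) it is
`ε_{w(k)} - ε_{w(k+1)}`, and for the last index (the sign-flip `τ_n`) it is `ε_{w(n)}`,
where `ε_i = e_i` and `ε_ī = -e_i`. -/
noncomputable def cvec {n : ℕ} (w : SignedPerm n) (k : Fin n) : Fin n →₀ ℤ :=
  if h : (k : ℕ) + 1 < n then
    sgnZ (w.2 k) • Finsupp.single (w.1 k) 1
      - sgnZ (w.2 ⟨(k : ℕ) + 1, h⟩) • Finsupp.single (w.1 ⟨(k : ℕ) + 1, h⟩) 1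
  else sgnZ (w.2 k) • Finsupp.single (w.1 k) 1

/-- The signed permutation `wτ_k`: for `k` with `k + 1 < n` it agrees with `w` except that
the values (with signs) at `k` and `k+1` are swapped; for the last index it agrees with `w`
except that the sign at the last index is flipped. -/
noncomputable def tauAct {n : ℕ} (w : SignedPerm n) (k : Fin n) : SignedPerm n :=
  if h : (k : ℕ) + 1 < n then
    (w.1 * Equiv.swap k ⟨(k : ℕ) + 1, h⟩, w.2 ∘ Equiv.swap k ⟨(k : ℕ) + 1, h⟩)
  else (w.1, Function.update w.2 k (!w.2 k))

/-!
`φ` sends `T_i` to the Cayley transform `κ(t_i) = (1 + t_i)/(1 - t_i)`, and `T_i⁻¹` to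
`κ(-t_i)`; both lie in `S`, so `φ` maps every Laurent monomial, hence all of `L`, into `S`.
Every edge vector is `c = ε_a + ε_b` or `c = ε_a` (signed unit vectors), and
`1 - κ(x) κ(y) = -2 (x + y) / ((1 - x)(1 - y))` shows `1 - φ(T^c) ∈ (Σ_j c_j t_j) · S`.
Applying `φ` to `f_w - f_{wτ_k} = (1 - T^c) g` finishes the proof.
-/

open AddMonoidAlgebra

section Cayley
variable {K : Type*} [Field K]

def cayley (x : K) : K := (1 + x) / (1 - x)

lemma cayley_neg (x : K) : cayley (-x) = (cayley x)⁻¹ := by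
  rw [cayley, cayley, inv_div, sub_neg_eq_add, ← sub_eq_add_neg]

lemma one_sub_cayley {x : K} (hx : 1 - x ≠ 0) : 1 - cayley x = x * (-2 * (1 - x)⁻¹) := by
  rw [cayley]
  field_simp
  ring

lemma one_sub_cayley_mul_cayley {x y : K} (hx : 1 - x ≠ 0) (hy : 1 - y ≠ 0) :
    1 - cayley x * cayley y = (x + y) * (-2 * (1 - x)⁻¹ * (1 - y)⁻¹) := by
  rw [cayley, cayley]
  field_simp
  ring

end Cayley

lemma AddMonoidAlgebra.map_single_zsmul {R G L : Type*} [Semiring R] [AddGroup G]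
    [DivisionRing L] (φ : AddMonoidAlgebra R G →+* L) (m : ℤ) (g : G) :
    φ (single (m • g) 1) = φ (single g 1) ^ m := by
  let f := ((φ : AddMonoidAlgebra R G →* L).comp (of R G)).toHomUnits
  calc φ (single (m • g) 1) = (f (Multiplicative.ofAdd g ^ m) : L) := by rw [← ofAdd_zsmul]; rfl
    _ = (f (Multiplicative.ofAdd g) : L) ^ m := by rw [map_zpow, Units.val_zpow_eq_zpow_val]
    _ = φ (single g 1) ^ m := rfl

lemma Subring.zpow_mem_of_inv_mem {K : Type*} [DivisionRing K] {S : Subring K} {x : K}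
    (hx : x ∈ S) (hx' : x⁻¹ ∈ S) (m : ℤ) : x ^ m ∈ S := by
  rcases m with m | m
  · rw [Int.ofNat_eq_natCast, zpow_natCast]
    exact pow_mem hx m
  · rw [zpow_negSucc, ← inv_pow]
    exact pow_mem hx' _

lemma sgnZ_not (b : Bool) : sgnZ (!b) = -sgnZ b := by
  cases b <;> rfl

section Generators
variable {n : ℕ}

lemma one_sub_intCast_mul_tvar_ne_zero (m : ℤ) (i : Fin n) : (1 : KK n) - m * tvar n i ≠ 0 := by
  have hpoly : (1 - (m : MvPolynomial (Fin n) ℚ) * MvPolynomial.X i) ≠ 0 := fun h => by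
    simpa using congrArg (MvPolynomial.eval 0) h
  simpa [tvar] using
    (map_ne_zero_iff _ (IsFractionRing.injective (MvPolynomial (Fin n) ℚ) (KK n))).mpr hpoly

lemma tvar_mem_SS (i : Fin n) : tvar n i ∈ SS n :=
  Subring.subset_closure (Or.inl (Or.inl ⟨i, rfl⟩))

lemma inv_one_sub_sgnZ_mul_tvar_mem_SS (b : Bool) (i : Fin n) :
    (1 - sgnZ b * tvar n i)⁻¹ ∈ SS n := by
  have h_add : (1 + tvar n i)⁻¹ ∈ SS n := Subring.subset_closure (Or.inr ⟨i, rfl⟩)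
  have h_sub : (1 - tvar n i)⁻¹ ∈ SS n := Subring.subset_closure (Or.inl (Or.inr ⟨i, rfl⟩))
  cases b <;> simpa [sgnZ]

lemma cayley_sgnZ_mul_tvar_mem_SS (b : Bool) (i : Fin n) :
    cayley (sgnZ b * tvar n i : KK n) ∈ SS n := by
  rw [cayley, div_eq_mul_inv]
  exact mul_mem (add_mem (one_mem _) (mul_mem (intCast_mem _ _) (tvar_mem_SS i)))
    (inv_one_sub_sgnZ_mul_tvar_mem_SS b i)

lemma cayley_tvar_zpow_mem_SS (i : Fin n) (m : ℤ) : cayley (tvar n i) ^ m ∈ SS n := by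
  refine Subring.zpow_mem_of_inv_mem ?_ ?_ m
  · simpa [sgnZ] using cayley_sgnZ_mul_tvar_mem_SS true i
  · simpa [sgnZ, cayley_neg] using cayley_sgnZ_mul_tvar_mem_SS false i

lemma sum_intCast_mul_tvar (c : Fin n →₀ ℤ) :
    ∑ j, (c j : KK n) * tvar n j = Finsupp.linearCombination ℤ (tvar n) c := by
  simp [Finsupp.linearCombination_apply, Finsupp.sum_fintype, zsmul_eq_mul]

end Generators

section Specialization
variable {n : ℕ} {φ : Laur n →+* KK n}
  (hφ : ∀ i, φ (Tvar n i) = (1 + tvar n i) / (1 - tvar n i))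
include hφ

lemma map_single_single (i : Fin n) (m : ℤ) :
    φ (single (Finsupp.single i m) 1) = cayley (tvar n i) ^ m := by
  rw [← Finsupp.smul_single_one, map_single_zsmul]
  exact congrArg (· ^ m) (hφ i)

lemma map_single_single_sgnZ (b : Bool) (i : Fin n) :
    φ (single (Finsupp.single i (sgnZ b)) 1) = cayley (sgnZ b * tvar n i : KK n) := by
  rw [map_single_single hφ]
  cases b <;> simp [sgnZ, cayley_neg]

lemma map_single_one_mem_SS (a : Fin n →₀ ℤ) : φ (single a 1) ∈ SS n := by
  induction a using Finsupp.induction with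
  | zero => rw [← one_def, map_one]; exact one_mem _
  | single_add i m a _ _ ih =>
    rw [← one_mul (1 : ℤ), ← single_mul_single, map_mul, map_single_single hφ]
    exact mul_mem (cayley_tvar_zpow_mem_SS i m) ih

lemma map_mem_SS (x : Laur n) : φ x ∈ SS n := by
  induction x using induction_linear with
  | zero => rw [map_zero]; exact zero_mem _
  | add x y hx hy => rw [map_add]; exact add_mem hx hy
  | single a r =>
    rw [← mul_one r, ← smul_single', map_zsmul]
    exact zsmul_mem (map_single_one_mem_SS hφ a) r

lemma exists_one_sub_map_single_single (b : Bool) (i : Fin n) :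
    ∃ s ∈ SS n, 1 - φ (single (Finsupp.single i (sgnZ b)) 1)
      = Finsupp.linearCombination ℤ (tvar n) (Finsupp.single i (sgnZ b)) * s := by
  refine ⟨-2 * (1 - sgnZ b * tvar n i)⁻¹,
    mul_mem (by simp) (inv_one_sub_sgnZ_mul_tvar_mem_SS b i), ?_⟩
  rw [map_single_single_sgnZ hφ, one_sub_cayley (one_sub_intCast_mul_tvar_ne_zero _ i),
    Finsupp.linearCombination_single, zsmul_eq_mul]

lemma exists_one_sub_map_single_add_single (a b : Fin n) (ε δ : Bool) :
    ∃ s ∈ SS n, 1 - φ (single (Finsupp.single a (sgnZ ε) + Finsupp.single b (sgnZ δ)) 1)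
      = Finsupp.linearCombination ℤ (tvar n)
          (Finsupp.single a (sgnZ ε) + Finsupp.single b (sgnZ δ)) * s := by
  refine ⟨-2 * (1 - sgnZ ε * tvar n a)⁻¹ * (1 - sgnZ δ * tvar n b)⁻¹,
    mul_mem (mul_mem (by simp)
      (inv_one_sub_sgnZ_mul_tvar_mem_SS ε a)) (inv_one_sub_sgnZ_mul_tvar_mem_SS δ b), ?_⟩
  rw [← one_mul (1 : ℤ), ← single_mul_single, map_mul, map_single_single_sgnZ hφ,
    map_single_single_sgnZ hφ, one_sub_cayley_mul_cayley (one_sub_intCast_mul_tvar_ne_zero _ a)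
      (one_sub_intCast_mul_tvar_ne_zero _ b), map_add, Finsupp.linearCombination_single,
    Finsupp.linearCombination_single, zsmul_eq_mul, zsmul_eq_mul]

lemma exists_one_sub_map_single_cvec (w : SignedPerm n) (k : Fin n) :
    ∃ s ∈ SS n, 1 - φ (single (cvec w k) 1)
      = Finsupp.linearCombination ℤ (tvar n) (cvec w k) * s := by
  rw [cvec]
  split_ifs
  · simp only [Finsupp.smul_single_one, sub_eq_add_neg, ← Finsupp.single_neg, ← sgnZ_not]
    exact exists_one_sub_map_single_add_single hφ _ _ _ _
  · rw [Finsupp.smul_single_one]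
    exact exists_one_sub_map_single_single hφ _ _

end Specialization

theorem stmt9_general {n : ℕ} (φ : Laur n →+* KK n)
    (hφ : ∀ i, φ (Tvar n i) = (1 + tvar n i) / (1 - tvar n i))
    (f : SignedPerm n → Laur n)
    (hf : ∀ (w : SignedPerm n) (k : Fin n),
      (1 - AddMonoidAlgebra.single (cvec w k) (1 : ℤ)) ∣ (f w - f (tauAct w k))) :
    (∀ w, φ (f w) ∈ SS n) ∧
    (∀ (w : SignedPerm n) (k : Fin n), ∃ s ∈ SS n,
      φ (f w) - φ (f (tauAct w k)) = (∑ j, (cvec w k j : KK n) * tvar n j) * s) := by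
  refine ⟨fun w => map_mem_SS hφ (f w), fun w k => ?_⟩
  obtain ⟨g, hg⟩ := hf w k
  obtain ⟨s, hs, hc⟩ := exists_one_sub_map_single_cvec hφ w k
  refine ⟨s * φ g, mul_mem hs (map_mem_SS hφ g), ?_⟩
  rw [← map_sub, hg, map_mul, map_sub, map_one, hc, sum_intCast_mul_tvar, mul_assoc]

/-- Well-definedness of `ψ_T` on the GKM description: if the family `(f_w)` satisfies the
`K`-theoretic compatibility (each `f_w - f_{wτ_k}` divisible by `1 - T^c`), then each
`φ(f_w)` lies in `S` and each difference `φ(f_w) - φ(f_{wτ_k})` lies in `(Σ_j c_j t_j)·S`. -/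
theorem stmt9 {n : ℕ} (hn : 1 ≤ n) (φ : Laur n →+* KK n)
    (hφ : ∀ i, φ (Tvar n i) = (1 + tvar n i) / (1 - tvar n i))
    (f : SignedPerm n → Laur n)
    (hf : ∀ (w : SignedPerm n) (k : Fin n),
      (1 - AddMonoidAlgebra.single (cvec w k) (1 : ℤ)) ∣ (f w - f (tauAct w k))) :
    (∀ w, φ (f w) ∈ SS n) ∧
    (∀ (w : SignedPerm n) (k : Fin n), ∃ s ∈ SS n,
      φ (f w) - φ (f (tauAct w k)) = (∑ j, (cvec w k j : KK n) * tvar n j) * s) :=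
  stmt9_general φ hφ f hf
end

section
/- Let A be a commutative ring equipped with an internal ℕ-grading A = ⊕_{i≥0} A_i (additive subgroups with A_i · A_j ⊆ A_{i+j} and 1 ∈ A_0) such that every homogeneous component A_i is 2-torsion-free (for x ∈ A_i, 2x = 0 implies x = 0). If a, b ∈ A both have degree-0 component equal to 1 (that is, a = 1 + a' and b = 1 + b' with a', b' ∈ ⊕_{i≥1} A_i) and a² = b², then a = b. -/
/-!
With `c = a + b` and `d = a - b` we have `c * d = a ^ 2 - b ^ 2 = 0` and `c₀ = 2`. If the
components of `d` vanish below degree `n`, the degree-`n` component of `c * d` is `c₀ * dₙ = 2 dₙ`,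
so `dₙ = 0` by 2-torsion-freeness; by induction on `n`, `d = 0`.
-/

open DirectSum

namespace DirectSum

variable {A σ : Type*} [Semiring A] [SetLike σ A] [AddSubmonoidClass σ A]
  (𝒜 : ℕ → σ) [GradedRing 𝒜]

theorem coe_decompose_mul_of_forall_lt_eq_zero {c d : A} {n : ℕ}
    (hd : ∀ j < n, decompose 𝒜 d j = 0) :
    (decompose 𝒜 (c * d) n : A) = decompose 𝒜 c 0 * decompose 𝒜 d n := by
  rw [decompose_mul, coe_mul_apply_eq_sum_antidiagonal,
    Finset.sum_eq_single_of_mem (0, n) (by simp)]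
  rintro ⟨i, j⟩ hij hne
  have hj : j < n := by
    rw [Finset.HasAntidiagonal.mem_antidiagonal] at hij
    simp only [ne_eq, Prod.mk.injEq, not_and] at hne
    omega
  simp [hd j hj]

theorem eq_zero_of_mul_eq_zero_of_decompose_zero_mul_injective {c d : A} (hcd : c * d = 0)
    (hc : ∀ i, ∀ x ∈ 𝒜 i, (decompose 𝒜 c 0 : A) * x = 0 → x = 0) : d = 0 := by
  have hcomp : ∀ n, decompose 𝒜 d n = 0 := by
    intro n
    induction n using Nat.strong_induction_on with
    | _ n ih =>
      have hprod := coe_decompose_mul_of_forall_lt_eq_zero 𝒜 (c := c) ih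
      rw [hcd, decompose_zero, zero_apply, ZeroMemClass.coe_zero] at hprod
      exact Subtype.ext (hc n _ (decompose 𝒜 d n).2 hprod.symm)
  apply (decompose 𝒜).injective
  ext n
  simp [hcomp n]

end DirectSum

/-- In a commutative ring with an internal ℕ-grading by additive subgroups whose homogeneous
components are 2-torsion-free, two elements whose degree-0 components both equal `1` and
whose squares agree must be equal. -/
theorem stmt10 {A : Type*} [CommRing A] (𝒜 : ℕ → AddSubgroup A) [GradedRing 𝒜]
    (htf : ∀ i : ℕ, ∀ x : A, x ∈ 𝒜 i → 2 * x = 0 → x = 0)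
    (a b : A)
    (ha : ((DirectSum.decompose 𝒜 a 0 : 𝒜 0) : A) = 1)
    (hb : ((DirectSum.decompose 𝒜 b 0 : 𝒜 0) : A) = 1)
    (hab : a ^ 2 = b ^ 2) : a = b := by
  have hprod : (a + b) * (a - b) = 0 := by
    rw [← sq_sub_sq, hab, sub_self]
  have hsum : (decompose 𝒜 (a + b) 0 : A) = 2 := by
    rw [decompose_add, DirectSum.add_apply, AddMemClass.coe_add, ha, hb, one_add_one_eq_two]
  rw [← sub_eq_zero]
  exact eq_zero_of_mul_eq_zero_of_decompose_zero_mul_injective 𝒜 hprod (hsum ▸ htf)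
end

section
/- Let n ≥ 1, let D be a delta-matroid on [n, n̄] with feasible sets F, and let w be a signed permutation on [n, n̄] (a bijection of [n] ∪ [n̄] with w(ī) = w(i)‾, viewed via w : [n] → [n] ∪ [n̄]). Then there exists a feasible set B_w ∈ F such that for every vector v in the relative interior of the cone σ_w, i.e. every v = Σ_{k=1}^n λ_k (e_{w(1)} + ⋯ + e_{w(k)}) with all λ_k > 0, and every feasible set B ∈ F with B ≠ B_w, one has ⟨e_{B_w ∩ [n]}, v⟩ < ⟨e_{B ∩ [n]}, v⟩. In particular, the minimizer of B ↦ ⟨e_{B∩[n]}, v⟩ over F is unique and is the same for all v in the relative interior of σ_w. -/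
open Finset

/-- Sign of a `Bool`: `true ↦ 1`, `false ↦ -1`. -/
def sgnR (b : Bool) : ℝ := if b then 1 else -1

/-- For a signed permutation `w` on `[n, n̄]` (encoded as an underlying permutation `w.1`
of `[n]` together with signs `w.2`, so that `w(k) = w.1 k` if `w.2 k = true` and
`w(k) = (w.1 k)‾` otherwise), the vector `e_{w(k)} ∈ ℝ^n`, with `e_ī = -e_i`. -/
def ew {n : ℕ} (w : Equiv.Perm (Fin n) × (Fin n → Bool)) (k : Fin n) : Fin n → ℝ :=
  sgnR (w.2 k) • (Pi.single (w.1 k) 1 : Fin n → ℝ)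

/-! For `v` in the open cone `σ_w` the numbers `|v i|` are nonzero and pairwise distinct, so `v`
is orthogonal to no vector `e_i`, `e_i ± e_j`. Such a `v` has a unique minimizer on `F`: otherwise
take two minimizers `B ≠ B'` at minimal Hamming distance. The segment `[e_B, e_B']` is a face of
the face of `P(D)` on which `v` is minimal, hence an edge of `P(D)`, and its direction is orthogonal
to `v`. The strict minimizer is locally constant in `v` and the open cone is connected, so it is
the same on the whole cone. -/

section ConvexHull

variable {E : Type*} [AddCommGroup E] [Module ℝ E] {T : Set E} {l : E →ₗ[ℝ] ℝ} {m : ℝ}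

theorem mem_convexHull_sep_of_le (hT : ∀ a ∈ T, m ≤ l a) {x : E} (hx : x ∈ convexHull ℝ T)
    (hxm : l x ≤ m) : x ∈ convexHull ℝ {a ∈ T | l a = m} := by
  classical
  rw [_root_.convexHull_eq] at hx
  obtain ⟨ι, t, w, z, hw₀, hw₁, hz, rfl⟩ := hx
  have hterm : ∀ i ∈ t, 0 ≤ w i * (l (z i) - m) := fun i hi =>
    mul_nonneg (hw₀ i hi) (sub_nonneg.2 (hT _ (hz i hi)))
  have hsum : ∑ i ∈ t, w i * (l (z i) - m) = 0 := by
    refine le_antisymm ?_ (sum_nonneg hterm)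
    rw [centerMass_eq_of_sum_1 _ _ hw₁, map_sum] at hxm
    simp only [map_smul, smul_eq_mul] at hxm
    simp only [mul_sub, sum_sub_distrib, ← sum_mul, hw₁]
    linarith
  rw [← t.centerMass_filter_ne_zero]
  refine (t.filter (w · ≠ 0)).centerMass_mem_convexHull (fun i hi => hw₀ i (mem_filter.1 hi).1)
    (by rw [sum_filter_ne_zero, hw₁]; exact one_pos) fun i hi => ?_
  obtain ⟨hi, hwi⟩ := mem_filter.1 hi
  have := (mul_eq_zero.1 ((sum_eq_zero_iff_of_nonneg hterm).1 hsum i hi)).resolve_left hwi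
  exact ⟨hz i hi, sub_eq_zero.1 this⟩

theorem isExtreme_convexHull_sep (hT : ∀ a ∈ T, m ≤ l a) :
    IsExtreme ℝ (convexHull ℝ T) (convexHull ℝ {a ∈ T | l a = m}) := by
  have hge : ∀ x ∈ convexHull ℝ T, m ≤ l x := fun x hx =>
    convexHull_min hT (convex_halfSpace_ge l.isLinear m) hx
  refine ⟨convexHull_mono (Set.sep_subset _ _), fun x₁ hx₁ x₂ hx₂ x hx hseg => ?_⟩
  have hlx : l x = m :=
    convexHull_min (fun a ha => ha.2) (convex_hyperplane l.isLinear m) hx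
  obtain ⟨a, b, ha, hb, hab, rfl⟩ := hseg
  simp only [map_add, map_smul, smul_eq_mul] at hlx
  have h₂ := hge x₂ hx₂
  refine mem_convexHull_sep_of_le hT hx₁ (not_lt.1 fun h₁ => ?_)
  have hm : a * m + b * m = m := by rw [← add_mul, hab, one_mul]
  linarith [mul_pos ha (sub_pos.2 h₁), mul_nonneg hb.le (sub_nonneg.2 h₂)]

end ConvexHull

theorem IsPreconnected.forall_lt_of_forall_lt {X ι : Type*} [TopologicalSpace X] {S : Set X}
    (hS : IsPreconnected S) {s : Finset ι} {f : ι → X → ℝ} (hf : ∀ i, Continuous (f i))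
    (hmin : ∀ x ∈ S, ∃ i ∈ s, ∀ j ∈ s, j ≠ i → f i x < f j x) {a : ι} (ha : a ∈ s) {x : X}
    (hx : x ∈ S) (hax : ∀ j ∈ s, j ≠ a → f a x < f j x) {y : X} (hy : y ∈ S) :
    ∀ j ∈ s, j ≠ a → f a y < f j y := by
  classical
  set U := ⋂ j ∈ s.erase a, {z | f a z < f j z}
  set V := ⋃ j ∈ s, {z | f j z < f a z}
  have hU : IsOpen U := isOpen_biInter_finset fun j _ => isOpen_lt (hf a) (hf j)
  have hV : IsOpen V := isOpen_biUnion fun j _ => isOpen_lt (hf j) (hf a)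
  have hUV : Disjoint U V := Set.disjoint_left.2 fun z hzU hzV => by
    obtain ⟨j, hj, hjz : f j z < f a z⟩ := Set.mem_iUnion₂.1 hzV
    obtain rfl | hja := eq_or_ne j a
    · exact lt_irrefl _ hjz
    · exact (Set.mem_iInter₂.1 hzU j (mem_erase.2 ⟨hja, hj⟩)).asymm hjz
  have hSUV : S ⊆ U ∪ V := fun z hz => by
    obtain ⟨i, hi, hiz⟩ := hmin z hz
    obtain rfl | hia := eq_or_ne i a
    · exact Or.inl (Set.mem_iInter₂.2 fun j hj => hiz j (mem_erase.1 hj).2 (mem_erase.1 hj).1)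
    · exact Or.inr (Set.mem_iUnion₂.2 ⟨i, hi, hiz a ha hia.symm⟩)
  have hxU : x ∈ U := Set.mem_iInter₂.2 fun j hj => hax j (mem_erase.1 hj).2 (mem_erase.1 hj).1
  have hyU := hS.subset_left_of_subset_union hU hV hUV hSUV ⟨x, hx, hxU⟩ hy
  exact fun j hj hja => Set.mem_iInter₂.1 hyU j (mem_erase.2 ⟨hja, hj⟩)

theorem strictAnti_sum_Ici {α : Type*} [Preorder α] [LocallyFiniteOrderTop α] {f : α → ℝ}
    (hf : ∀ a, 0 < f a) : StrictAnti fun a => ∑ k ∈ Ici a, f k := fun a _ hab =>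
  sum_lt_sum_of_subset (Ici_subset_Ici.2 hab.le) (mem_Ici.2 le_rfl)
    (fun h => hab.not_ge (mem_Ici.1 h)) (hf a) fun k _ _ => (hf k).le

theorem dotProduct_eVec_eq_add_card_symmDiff_sdiff {n : ℕ} (B S C : Finset (Fin n)) :
    (fun i => if i ∈ S then 0 else 1 - 2 * eVec B i) ⬝ᵥ eVec C =
      (fun i => if i ∈ S then 0 else 1 - 2 * eVec B i) ⬝ᵥ eVec B + #(symmDiff C B \ S) := by
  rw [← sub_eq_iff_eq_add', ← dotProduct_sub, ← filter_univ_mem (symmDiff C B \ S), ← sum_boole]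
  refine sum_congr rfl fun i _ => ?_
  by_cases hS : i ∈ S <;> by_cases hB : i ∈ B <;> by_cases hC : i ∈ C <;>
    norm_num [eVec, mem_symmDiff, hS, hB, hC]

theorem eVec_injective {n : ℕ} : Function.Injective (eVec (n := n)) := fun B C h => by
  ext i
  have := congrFun h i
  by_cases hB : i ∈ B <;> by_cases hC : i ∈ C <;> simp_all [eVec]

theorem isExtreme_segment_eVec {n : ℕ} {A : Set (Finset (Fin n))} {B B' : Finset (Fin n)}
    (hB : B ∈ A) (hB' : B' ∈ A)
    (hclosest : ∀ C ∈ A, C ≠ B → #(symmDiff B B') ≤ #(symmDiff B C)) :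
    IsExtreme ℝ (convexHull ℝ (eVec '' A)) (segment ℝ (eVec B) (eVec B')) := by
  set S := symmDiff B B'
  -- On 0/1 vectors `c ⬝ᵥ ·` is, up to a constant, the Hamming distance to `B` outside `S`.
  set c : Fin n → ℝ := fun i => if i ∈ S then 0 else 1 - 2 * eVec B i
  have hc : ∀ C, c ⬝ᵥ eVec C = c ⬝ᵥ eVec B + #(symmDiff C B \ S) :=
    dotProduct_eVec_eq_add_card_symmDiff_sdiff B S
  have hface : {x ∈ eVec '' A | dotProductBilin ℝ ℝ c x = c ⬝ᵥ eVec B} = {eVec B, eVec B'} := by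
    ext x
    simp only [Set.mem_ofPred_eq, Set.mem_image, dotProductBilin_apply_apply, Set.mem_insert_iff,
      Set.mem_singleton_iff]
    constructor
    · rintro ⟨⟨C, hC, rfl⟩, hCm⟩
      rw [hc, add_eq_left, Nat.cast_eq_zero, card_eq_zero, sdiff_eq_empty_iff_subset] at hCm
      by_cases hCB : C = B
      · exact Or.inl (congrArg eVec hCB)
      · refine Or.inr (congrArg eVec ?_)
        have hS : symmDiff C B = S := eq_of_subset_of_card_le hCm
          (by rw [symmDiff_comm]; exact hclosest C hC hCB)
        rw [← symmDiff_symmDiff_cancel_right B C, hS, symmDiff_comm,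
          symmDiff_symmDiff_cancel_left]
    · rintro (rfl | rfl)
      · exact ⟨⟨B, hB, rfl⟩, rfl⟩
      · refine ⟨⟨B', hB', rfl⟩, ?_⟩
        rw [hc, symmDiff_comm B' B, sdiff_self]
        simp
  rw [← convexHull_pair, ← hface]
  refine isExtreme_convexHull_sep ?_
  rintro _ ⟨C, -, rfl⟩
  rw [dotProductBilin_apply_apply, hc C]
  simp

theorem IsEdgeDir.dotProduct_ne_zero {n : ℕ} {d v : Fin n → ℝ} (hd : IsEdgeDir d) (hd₀ : d ≠ 0)
    (hv₀ : ∀ i, v i ≠ 0) (hv : Function.Injective fun i => |v i|) : d ⬝ᵥ v ≠ 0 := by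
  have hsum : ∀ i j, v i + v j ≠ 0 := fun i j h => by
    obtain rfl | hij := eq_or_ne i j
    · exact hv₀ i (by linarith)
    · exact hv.ne hij (by simp only [eq_neg_of_add_eq_zero_left h, abs_neg])
  rcases hd with ⟨i, rfl | rfl⟩ | ⟨i, j, rfl | rfl | rfl⟩
  · simpa using hv₀ i
  · simpa using hv₀ i
  · simpa [add_dotProduct] using hsum i j
  · rw [neg_dotProduct, neg_ne_zero]
    simpa [add_dotProduct] using hsum i j
  · obtain rfl | hij := eq_or_ne i j
    · exact absurd (sub_self _) hd₀
    · simpa [sub_dotProduct, sub_eq_zero] using fun h => hv.ne hij (congrArg abs h)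

theorem DeltaMatroid.exists_forall_dotProduct_lt {n : ℕ} (D : DeltaMatroid n) {v : Fin n → ℝ}
    (hv : ∀ d, IsEdgeDir d → d ≠ 0 → d ⬝ᵥ v ≠ 0) :
    ∃ B ∈ D.feasible, ∀ C ∈ D.feasible, C ≠ B → eVec B ⬝ᵥ v < eVec C ⬝ᵥ v := by
  classical
  obtain ⟨B, hB, hmin⟩ := D.feasible.exists_min_image (eVec · ⬝ᵥ v) D.feasible_nonempty
  refine ⟨B, hB, fun C hC hCB => (hmin C hC).lt_of_ne fun hCv => ?_⟩
  set A := D.feasible.filter (eVec · ⬝ᵥ v = eVec B ⬝ᵥ v)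
  have hBA : B ∈ A := mem_filter.2 ⟨hB, rfl⟩
  obtain ⟨B', hB', hclosest⟩ := (A.erase B).exists_min_image (fun C => #(symmDiff B C))
    ⟨C, mem_erase.2 ⟨hCB, mem_filter.2 ⟨hC, hCv.symm⟩⟩⟩
  obtain ⟨hB'B, hB'A⟩ := mem_erase.1 hB'
  have hface : IsExtreme ℝ (basePolytope D.feasible) (convexHull ℝ (eVec '' A)) := by
    have hsep : {x ∈ eVec '' D.feasible | (dotProductBilin ℝ ℝ).flip v x = eVec B ⬝ᵥ v} =
        eVec '' A := by
      rw [coe_filter]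
      exact (Set.image_inter_preimage _ _ _).symm
    rw [← hsep]
    refine isExtreme_convexHull_sep ?_
    rintro _ ⟨C, hC, rfl⟩
    simpa using hmin C hC
  have hedge : IsExtreme ℝ (basePolytope D.feasible) (segment ℝ (eVec B) (eVec B')) :=
    hface.trans (isExtreme_segment_eVec hBA hB'A fun C hC hCB =>
      hclosest C (mem_erase.2 ⟨hCB, hC⟩))
  have hB'v : eVec B' ⬝ᵥ v = eVec B ⬝ᵥ v := (mem_filter.1 hB'A).2
  have hne : eVec B ≠ eVec B' := eVec_injective.ne hB'B.symm
  exact hv _ (D.edge_dir _ _ (hedge.subset (left_mem_segment ℝ _ _))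
    (hedge.subset (right_mem_segment ℝ _ _)) hne hedge) (sub_ne_zero.2 hne.symm)
    (by rw [sub_dotProduct, hB'v, sub_self])

theorem abs_sgnR (b : Bool) : |sgnR b| = 1 := by
  cases b <;> simp [sgnR]

noncomputable def coneVec {n : ℕ} (w : Equiv.Perm (Fin n) × (Fin n → Bool)) (lam : Fin n → ℝ) :
    Fin n → ℝ :=
  ∑ k, lam k • ∑ j ∈ Iic k, ew w j

theorem coneVec_eq_sum_Ici {n : ℕ} (w : Equiv.Perm (Fin n) × (Fin n → Bool)) (lam : Fin n → ℝ) :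
    coneVec w lam = ∑ j, (∑ k ∈ Ici j, lam k) • ew w j := by
  simp only [coneVec, smul_sum, sum_smul]
  exact sum_comm' fun k j => by simp

theorem coneVec_apply {n : ℕ} (w : Equiv.Perm (Fin n) × (Fin n → Bool)) (lam : Fin n → ℝ)
    (i : Fin n) : coneVec w lam i = (∑ k ∈ Ici (w.1.symm i), lam k) * sgnR (w.2 (w.1.symm i)) := by
  rw [coneVec_eq_sum_Ici, Finset.sum_apply, Fintype.sum_eq_single (w.1.symm i)]
  · simp [ew]
  · intro j hj
    have hij : i ≠ w.1 j := fun h => hj (by simp [h])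
    simp [ew, hij]

theorem abs_coneVec_apply {n : ℕ} (w : Equiv.Perm (Fin n) × (Fin n → Bool)) {lam : Fin n → ℝ}
    (hlam : ∀ k, 0 < lam k) (i : Fin n) :
    |coneVec w lam i| = ∑ k ∈ Ici (w.1.symm i), lam k := by
  rw [coneVec_apply, abs_mul, abs_sgnR, mul_one,
    abs_of_pos (sum_pos (fun k _ => hlam k) nonempty_Ici)]

theorem continuous_dotProduct_coneVec {n : ℕ} (w : Equiv.Perm (Fin n) × (Fin n → Bool))
    (x : Fin n → ℝ) : Continuous fun lam => x ⬝ᵥ coneVec w lam := by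
  unfold dotProduct coneVec
  fun_prop

theorem IsEdgeDir.dotProduct_coneVec_ne_zero {n : ℕ} {d : Fin n → ℝ} (hd : IsEdgeDir d)
    (hd₀ : d ≠ 0) (w : Equiv.Perm (Fin n) × (Fin n → Bool)) {lam : Fin n → ℝ}
    (hlam : ∀ k, 0 < lam k) : d ⬝ᵥ coneVec w lam ≠ 0 := by
  refine hd.dotProduct_ne_zero hd₀ (fun i => abs_pos.1 ?_) fun i j h => ?_
  · rw [abs_coneVec_apply w hlam]
    exact sum_pos (fun k _ => hlam k) nonempty_Ici
  · simp only [abs_coneVec_apply w hlam] at h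
    exact w.1.symm.injective ((strictAnti_sum_Ici hlam).injective h)

theorem stmt13_general {n : ℕ} (D : DeltaMatroid n)
    (w : Equiv.Perm (Fin n) × (Fin n → Bool)) :
    ∃ Bw ∈ D.feasible, ∀ lam : Fin n → ℝ, (∀ k, 0 < lam k) →
      ∀ B ∈ D.feasible, B ≠ Bw →
        ∑ i, eVec Bw i * (∑ k, lam k • ∑ j ∈ Finset.Iic k, ew w j) i
          < ∑ i, eVec B i * (∑ k, lam k • ∑ j ∈ Finset.Iic k, ew w j) i := by
  have hmin : ∀ lam : Fin n → ℝ, (∀ k, 0 < lam k) → ∃ B ∈ D.feasible, ∀ C ∈ D.feasible,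
      C ≠ B → eVec B ⬝ᵥ coneVec w lam < eVec C ⬝ᵥ coneVec w lam := fun lam hlam =>
    D.exists_forall_dotProduct_lt fun d hd hd₀ => hd.dotProduct_coneVec_ne_zero hd₀ w hlam
  obtain ⟨Bw, hBw, hBw_min⟩ := hmin 1 fun _ => one_pos
  have hS : IsPreconnected (Set.univ.pi fun _ : Fin n => Set.Ioi (0 : ℝ)) :=
    isPreconnected_univ_pi fun _ => isPreconnected_Ioi
  exact ⟨Bw, hBw, fun lam hlam => hS.forall_lt_of_forall_lt
    (fun B => continuous_dotProduct_coneVec w (eVec B)) (fun μ hμ => hmin μ (by simpa using hμ))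
    hBw (by simp) hBw_min (by simpa using hlam)⟩

/-- Existence and uniqueness of the `w`-minimal feasible set: there is `B_w ∈ F` whose
vertex strictly minimizes `⟨e_{B ∩ [n]}, v⟩` for every
`v = Σ_k λ_k (e_{w(1)} + ⋯ + e_{w(k)})` with all `λ_k > 0` (the relative interior
of the cone `σ_w`). -/
theorem stmt13 {n : ℕ} (hn : 1 ≤ n) (D : DeltaMatroid n)
    (w : Equiv.Perm (Fin n) × (Fin n → Bool)) :
    ∃ Bw ∈ D.feasible, ∀ lam : Fin n → ℝ, (∀ k, 0 < lam k) →
      ∀ B ∈ D.feasible, B ≠ Bw →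
        ∑ i, eVec Bw i * (∑ k, lam k • ∑ j ∈ Finset.Iic k, ew w j) i
          < ∑ i, eVec B i * (∑ k, lam k • ∑ j ∈ Finset.Iic k, ew w j) i :=
  stmt13_general D w
end

section
/- In ℤ^7, let g_1 = e_1+e_2, g_2 = e_1+e_3, g_3 = e_2+e_3, g_4 = e_3+e_4, g_5 = e_4+e_5, g_6 = e_5+e_6, g_7 = e_5+e_7, g_8 = e_6+e_7, and let w = (1,1,1,0,1,1,1). Then: (a) w = g_2 + g_3 − g_4 + g_5 + g_8, so w lies in the subgroup of ℤ^7 generated by g_1,…,g_8; (b) w = (1/2)(g_1+g_2+g_3) + (1/2)(g_6+g_7+g_8) in ℝ^7, so w lies in the rational cone generated by g_1,…,g_8; but (c) there exist no nonnegative integers a_1,…,a_8 with Σ_{i=1}^8 a_i g_i = w, i.e. w does not lie in the additive submonoid of ℤ^7 generated by g_1,…,g_8. -/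
/-- The eight generators `g_1,…,g_8 ∈ ℤ^7` (0-indexed as `g 0,…,g 7`):
`e₁+e₂, e₁+e₃, e₂+e₃, e₃+e₄, e₄+e₅, e₅+e₆, e₅+e₇, e₆+e₇`. -/
def gZ : Fin 8 → Fin 7 → ℤ :=
  ![![1,1,0,0,0,0,0], ![1,0,1,0,0,0,0], ![0,1,1,0,0,0,0], ![0,0,1,1,0,0,0],
    ![0,0,0,1,1,0,0], ![0,0,0,0,1,1,0], ![0,0,0,0,1,0,1], ![0,0,0,0,0,1,1]]

/-- The point `w = (1,1,1,0,1,1,1) ∈ ℤ^7`. -/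
def wZ : Fin 7 → ℤ := ![1,1,1,0,1,1,1]

/-- The real versions of the generators. -/
noncomputable def gR (a : Fin 8) : Fin 7 → ℝ := fun i => (gZ a i : ℝ)

/-- The real version of `w`. -/
noncomputable def wR : Fin 7 → ℝ := fun i => (wZ i : ℝ)

section NatCombination

variable {ι : Type*} [Fintype ι]

lemma eq_zero_of_nsmul_sum_apply_eq_zero {κ : Type*} {g : ι → κ → ℤ} {a : ι → ℕ} {j : κ}
    (hg : ∀ i, 0 ≤ g i j) (h : (∑ i, a i • g i) j = 0) {i : ι} (hi : 0 < g i j) : a i = 0 := by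
  rw [Finset.sum_apply] at h
  simp only [Pi.smul_apply, nsmul_eq_mul] at h
  have hterm : (a i : ℤ) * g i j = 0 :=
    (Finset.sum_eq_zero_iff_of_nonneg fun k _ => mul_nonneg (Nat.cast_nonneg _) (hg k)).1 h i
      (Finset.mem_univ i)
  exact_mod_cast (mul_eq_zero.1 hterm).resolve_right hi.ne'

lemma even_map_nsmul_sum {M : Type*} [AddCommMonoid M] (φ : M →+ ℤ) {g : ι → M} {a : ι → ℕ}
    (h : ∀ i, a i ≠ 0 → Even (φ (g i))) : Even (φ (∑ i, a i • g i)) := by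
  rw [map_sum]
  refine Finset.even_sum _ fun i _ => ?_
  rw [map_nsmul]
  by_cases hai : a i = 0
  · simp [hai]
  · exact (h i hai).nsmul_right _

end NatCombination

-- The fourth coordinate of `w` vanishes, so `g₄ = e₃+e₄` and `g₅ = e₄+e₅` cannot occur; every
-- other generator has an even coordinate sum on the triangle `e₁, e₂, e₃`, but `w` has sum `3`.
lemma nsmul_sum_gZ_ne_wZ (a : Fin 8 → ℕ) : ∑ i, a i • gZ i ≠ wZ := by
  intro hw
  have hnot_used i (hi : 0 < gZ i 3) : a i = 0 :=
    eq_zero_of_nsmul_sum_apply_eq_zero (by decide) (hw ▸ rfl) hi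
  let φ : (Fin 7 → ℤ) →+ ℤ :=
    Pi.evalAddMonoidHom (fun _ => ℤ) 0 + Pi.evalAddMonoidHom (fun _ => ℤ) 1 +
      Pi.evalAddMonoidHom (fun _ => ℤ) 2
  have heven : Even (φ wZ) := hw ▸ even_map_nsmul_sum φ fun i hai => by
    fin_cases i <;> first | decide | exact absurd (hnot_used _ (by decide)) hai
  exact absurd heven (by decide)

/-- (a) `w = g₂ + g₃ − g₄ + g₅ + g₈`, so `w` lies in the subgroup of `ℤ^7` generated by
`g₁,…,g₈`; (b) `w = ½(g₁+g₂+g₃) + ½(g₆+g₇+g₈)`, so `w` lies in the cone generated by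
`g₁,…,g₈`; but (c) `w` is not an ℕ-linear combination of `g₁,…,g₈`, i.e. it does not lie
in the additive submonoid of `ℤ^7` they generate. -/
theorem stmt15 :
    (wZ = gZ 1 + gZ 2 - gZ 3 + gZ 4 + gZ 7 ∧
      wZ ∈ AddSubgroup.closure (Set.range gZ)) ∧
    (wR = (1/2 : ℝ) • (gR 0 + gR 1 + gR 2) + (1/2 : ℝ) • (gR 5 + gR 6 + gR 7) ∧
      ∃ a : Fin 8 → ℝ, (∀ i, 0 ≤ a i) ∧ ∑ i, a i • gR i = wR) ∧
    ¬ ∃ a : Fin 8 → ℕ, ∑ i, a i • gZ i = wZ := by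
  have ha : wZ = gZ 1 + gZ 2 - gZ 3 + gZ 4 + gZ 7 := by decide
  have hb : wR = (1/2 : ℝ) • (gR 0 + gR 1 + gR 2) + (1/2 : ℝ) • (gR 5 + gR 6 + gR 7) := by
    ext i; fin_cases i <;> simp [gR, wR, gZ, wZ] <;> norm_num
  refine ⟨⟨ha, ?_⟩, ⟨hb, ?_⟩, ?_⟩
  · have hg j : gZ j ∈ AddSubgroup.closure (Set.range gZ) :=
      AddSubgroup.subset_closure (Set.mem_range_self j)
    exact ha ▸ add_mem (add_mem (sub_mem (add_mem (hg 1) (hg 2)) (hg 3)) (hg 4)) (hg 7)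
  · refine ⟨![1/2, 1/2, 1/2, 0, 0, 1/2, 1/2, 1/2], fun i => by fin_cases i <;> norm_num, ?_⟩
    rw [hb, Fin.sum_univ_eight]
    simp only [Matrix.cons_val]
    module
  · exact fun ⟨a, hw⟩ => nsmul_sum_gZ_ne_wZ a hw
end
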